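/- arXiv:2305.09272 — 4 statements merged into one kernel-verified Lean document; each statement's English description precedes it below -/
import Mathlib

section
/- Let θ : ℕ → ℝ satisfy θᵢ ≥ 0 for all i and Σ_{i=0}^∞ θᵢ = 1, and let η ∈ (0, 1) satisfy Σ_{i=0}^∞ θᵢ η^i = η. Define the transition matrix P : ℕ × ℕ → ℝ by P(k, 0) = 1 − Σ_{i=0}^{k} θᵢ, P(k, j) = θ_{k+1−j} for 1 ≤ j ≤ k + 1, and P(k, j) = 0 for j > k + 1. Then π_j := (1 − η)η^j defines a probability distribution on ℕ (π_j ≥ 0 and Σ_j π_j = 1) which is stationary for P, i.e., for every j ∈ ℕ, Σ_{k=0}^∞ π_k · P(k, j) = π_j. -/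
/-- For the embedded Markov chain of the G/M/1 queue: if `θᵢ ≥ 0` with
`Σᵢ θᵢ = 1`, `η ∈ (0,1)` satisfies the fixed-point equation `Σᵢ θᵢ ηⁱ = η`,
and `P` is the transition matrix with `P(k,0) = 1 − Σ_{i≤k} θᵢ`,
`P(k,j) = θ_{k+1−j}` for `1 ≤ j ≤ k+1` and `P(k,j) = 0` for `j > k+1`, then
`π_j = (1 − η)η^j` is a probability distribution on ℕ that is stationary
for `P`. -/
theorem gm1_geometric_stationary_distribution
    (θ : ℕ → ℝ) (hθ : ∀ i, 0 ≤ θ i) (hθsum : ∑' i : ℕ, θ i = 1)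
    (η : ℝ) (hη : η ∈ Set.Ioo (0 : ℝ) 1)
    (hfix : ∑' i : ℕ, θ i * η ^ i = η)
    (P : ℕ → ℕ → ℝ)
    (hP0 : ∀ k, P k 0 = 1 - ∑ i ∈ Finset.range (k + 1), θ i)
    (hP1 : ∀ k j, 1 ≤ j → j ≤ k + 1 → P k j = θ (k + 1 - j))
    (hP2 : ∀ k j, k + 1 < j → P k j = 0)
    (π : ℕ → ℝ) (hπ : ∀ j, π j = (1 - η) * η ^ j) :
    (∀ j, 0 ≤ π j) ∧ (∑' j : ℕ, π j = 1) ∧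
    ∀ j, ∑' k : ℕ, π k * P k j = π j := by
  obtain ⟨hη0, hη1⟩ := hη
  have h1η : (0:ℝ) < 1 - η := by linarith
  have hgeo : Summable (fun n : ℕ => η ^ n) :=
    summable_geometric_of_lt_one hη0.le hη1
  have hsθ : Summable θ := by
    by_contra h
    rw [tsum_eq_zero_of_not_summable h] at hθsum
    norm_num at hθsum
  have hsf : Summable (fun i : ℕ => θ i * η ^ i) := by
    refine Summable.of_nonneg_of_le (fun i => ?_) (fun i => ?_) hsθ
    · exact mul_nonneg (hθ i) (pow_nonneg hη0.le i)
    · calc θ i * η ^ i ≤ θ i * 1 := by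
            exact mul_le_mul_of_nonneg_left (pow_le_one₀ hη0.le hη1.le) (hθ i)
        _ = θ i := mul_one _
  have hπnn : ∀ j, 0 ≤ π j := by
    intro j
    rw [hπ j]
    exact mul_nonneg h1η.le (pow_nonneg hη0.le j)
  have hπeq : π = fun j => (1 - η) * η ^ j := funext hπ
  have hπs : Summable π := by rw [hπeq]; exact hgeo.mul_left _
  have hπsum : ∑' j : ℕ, π j = 1 := by
    rw [hπeq, tsum_mul_left, tsum_geometric_of_lt_one hη0.le hη1,
      mul_inv_cancel₀ h1η.ne']
  refine ⟨hπnn, hπsum, fun j => ?_⟩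
  have hSle : ∀ k : ℕ, ∑ i ∈ Finset.range (k + 1), θ i ≤ 1 := by
    intro k
    rw [← hθsum]
    exact Summable.sum_le_tsum _ (fun i _ => hθ i) hsθ
  match j with
  | 0 =>
    -- Cauchy product: ∑ η^n * S_n = η * (1-η)⁻¹
    have hfn : Summable (fun i : ℕ => ‖θ i * η ^ i‖) := by
      refine hsf.congr fun i => ?_
      exact (Real.norm_of_nonneg (mul_nonneg (hθ i) (pow_nonneg hη0.le i))).symm
    have hgn : Summable (fun n : ℕ => ‖η ^ n‖) := by
      refine hgeo.congr fun n => ?_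
      exact (Real.norm_of_nonneg (pow_nonneg hη0.le n)).symm
    have hcauchy :
        HasSum (fun n : ℕ => η ^ n * ∑ i ∈ Finset.range (n + 1), θ i)
          (η * (1 - η)⁻¹) := by
      have h := hasSum_sum_range_mul_of_summable_norm hfn hgn
      rw [hfix, tsum_geometric_of_lt_one hη0.le hη1] at h
      refine h.congr_fun fun n => ?_
      rw [Finset.mul_sum]
      refine Finset.sum_congr rfl fun k hk => ?_
      have hkn : k ≤ n := Nat.lt_succ_iff.mp (Finset.mem_range.mp hk)
      rw [mul_assoc, ← pow_add, Nat.add_sub_cancel' hkn, mul_comm]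
    have hM : HasSum (fun n : ℕ => π n * ∑ i ∈ Finset.range (n + 1), θ i) η := by
      have h := hcauchy.mul_left (1 - η)
      have : (1 - η) * (η * (1 - η)⁻¹) = η := by
        field_simp
      rw [this] at h
      refine h.congr_fun fun n => ?_
      rw [hπ n]; ring
    have heq : (fun k : ℕ => π k * P k 0)
        = fun k => π k - π k * ∑ i ∈ Finset.range (k + 1), θ i := by
      funext k
      rw [hP0 k, mul_sub, mul_one]
    rw [heq, Summable.tsum_sub hπs hM.summable, hπsum, hM.tsum_eq, hπ 0]
    simp
  | (m + 1) =>
    have hinj : Function.Injective (fun i : ℕ => i + m) :=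
      fun a b h => by simpa using h
    have hsupp : Function.support (fun k : ℕ => π k * P k (m + 1))
        ⊆ Set.range (fun i : ℕ => i + m) := by
      intro x hx
      rcases Nat.lt_or_ge x m with hxm | hxm
      · have h0 : P x (m + 1) = 0 := hP2 x (m + 1) (by omega)
        exact absurd (by simp [h0] : (fun k => π k * P k (m + 1)) x = 0) hx
      · exact ⟨x - m, by simp [Nat.sub_add_cancel hxm]⟩
    have key : ∑' i : ℕ, π (i + m) * P (i + m) (m + 1)
        = ∑' k : ℕ, π k * P k (m + 1) :=
      Function.Injective.tsum_eq hinj hsupp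
    rw [← key]
    have hterm : ∀ i : ℕ, π (i + m) * P (i + m) (m + 1)
        = ((1 - η) * η ^ m) * (θ i * η ^ i) := by
      intro i
      rw [hP1 (i + m) (m + 1) (by omega) (by omega), hπ (i + m)]
      have : i + m + 1 - (m + 1) = i := by omega
      rw [this, pow_add]
      ring
    rw [tsum_congr hterm, tsum_mul_left, hfix, hπ (m + 1), pow_succ]
    ring
end

section
/- Let μ > 0 and let G be a Borel probability measure on (0, ∞) with mean ∫ t dG(t) = 1/λ where 0 < λ < μ, and define f(η) = ∫₀^∞ e^{−μ(1−η)t} dG(t) for η ∈ [0, 1]. Then f(0) > 0, f(1) = 1, f is continuous, monotone increasing and convex on [0, 1], and there exists η ∈ (0, 1) with f(η) = η. -/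
open MeasureTheory

open Filter Topology

set_option maxHeartbeats 1000000

/-- For a G/M/1 queue with general inter-arrival distribution `G` on `(0, ∞)`
of mean `1/λ` and exponential service rate `μ > λ > 0`, the function
`f(η) = ∫₀^∞ e^{−μ(1−η)t} dG(t)` satisfies `f(0) > 0`, `f(1) = 1`, is
continuous, monotone increasing and convex on `[0, 1]`, and has a fixed
point `η ∈ (0, 1)`. -/
theorem gm1_laplace_fixed_point
    (μ lam : ℝ) (hlam : 0 < lam) (hlm : lam < μ)
    (G : Measure ℝ) [IsProbabilityMeasure G] (hG : G (Set.Iic 0) = 0)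
    (hmean : (∫ t, t ∂G) = 1 / lam)
    (f : ℝ → ℝ)
    (hf : ∀ η, f η = ∫ t, Real.exp (-μ * (1 - η) * t) ∂G) :
    0 < f 0 ∧ f 1 = 1 ∧
    ContinuousOn f (Set.Icc 0 1) ∧
    MonotoneOn f (Set.Icc 0 1) ∧
    ConvexOn ℝ (Set.Icc 0 1) f ∧
    ∃ η ∈ Set.Ioo (0 : ℝ) 1, f η = η := by
  have hμ : 0 < μ := hlam.trans hlm
  have hae : ∀ᵐ t ∂G, 0 < t := by
    rw [ae_iff]
    convert hG using 2
    ext t; simp [not_lt]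
  have hint : ∀ η : ℝ, η ≤ 1 → Integrable (fun t => Real.exp (-μ * (1 - η) * t)) G := by
    intro η hη
    refine (integrable_const (1:ℝ)).mono' ?_ ?_
    · exact (Real.continuous_exp.comp (by continuity)).aestronglyMeasurable
    · filter_upwards [hae] with t ht
      rw [Real.norm_eq_abs, abs_of_pos (Real.exp_pos _), Real.exp_le_one_iff]
      nlinarith [mul_nonneg (mul_nonneg hμ.le (by linarith : (0:ℝ) ≤ 1 - η)) ht.le]
  have hf0 : 0 < f 0 := by
    rw [hf]
    exact integral_exp_pos (hint 0 zero_le_one)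
  have hf1 : f 1 = 1 := by
    rw [hf]; simp
  have hcont : ContinuousOn f (Set.Icc 0 1) := by
    have : ContinuousOn (fun η => ∫ t, Real.exp (-μ * (1 - η) * t) ∂G) (Set.Icc 0 1) := by
      intro x hx
      apply continuousWithinAt_of_dominated (bound := fun _ => (1:ℝ))
      · filter_upwards with y
        exact (Real.continuous_exp.comp (by continuity)).aestronglyMeasurable
      · filter_upwards [self_mem_nhdsWithin] with y hy
        filter_upwards [hae] with t ht
        rw [Real.norm_eq_abs, abs_of_pos (Real.exp_pos _), Real.exp_le_one_iff]
        nlinarith [mul_nonneg (mul_nonneg hμ.le (by linarith [hy.2] : (0:ℝ) ≤ 1 - y)) ht.le]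
      · exact integrable_const 1
      · filter_upwards with t
        exact (Real.continuous_exp.comp (by continuity)).continuousWithinAt
    exact this.congr (fun η _ => hf η)
  have hmono : MonotoneOn f (Set.Icc 0 1) := by
    intro a ha b hb hab
    rw [hf, hf]
    refine integral_mono_ae (hint a ha.2) (hint b hb.2) ?_
    filter_upwards [hae] with t ht
    apply Real.exp_le_exp.2
    nlinarith [mul_nonneg (mul_nonneg hμ.le (sub_nonneg.2 hab)) ht.le]
  have hconv : ConvexOn ℝ (Set.Icc 0 1) f := by
    refine ⟨convex_Icc 0 1, ?_⟩
    intro x hx y hy a b ha hb hab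
    have hmem : a • x + b • y ∈ Set.Icc (0:ℝ) 1 := (convex_Icc 0 1) hx hy ha hb hab
    simp only [smul_eq_mul] at hmem ⊢
    rw [hf, hf, hf]
    have key : ∀ t : ℝ, Real.exp (-μ * (1 - (a * x + b * y)) * t)
        ≤ a * Real.exp (-μ * (1 - x) * t) + b * Real.exp (-μ * (1 - y) * t) := by
      intro t
      have h := convexOn_exp.2 (Set.mem_univ (-μ * (1 - x) * t))
        (Set.mem_univ (-μ * (1 - y) * t)) ha hb hab
      simp only [smul_eq_mul] at h
      have harg : -μ * (1 - (a * x + b * y)) * t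
          = a * (-μ * (1 - x) * t) + b * (-μ * (1 - y) * t) := by
        linear_combination (μ * t) * hab
      rw [harg]
      exact h
    calc ∫ t, Real.exp (-μ * (1 - (a * x + b * y)) * t) ∂G
        ≤ ∫ t, (a * Real.exp (-μ * (1 - x) * t) + b * Real.exp (-μ * (1 - y) * t)) ∂G := by
          refine integral_mono (hint _ hmem.2) ?_ key
          exact ((hint x hx.2).const_mul a).add ((hint y hy.2).const_mul b)
      _ = a * ∫ t, Real.exp (-μ * (1 - x) * t) ∂G + b * ∫ t, Real.exp (-μ * (1 - y) * t) ∂G := by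
          rw [integral_add ((hint x hx.2).const_mul a) ((hint y hy.2).const_mul b),
            integral_const_mul, integral_const_mul]
  refine ⟨hf0, hf1, hcont, hmono, hconv, ?_⟩
  have hid : Integrable (fun t => t) G := by
    by_contra h
    rw [integral_undef h] at hmean
    exact (one_div_pos.2 hlam).ne' hmean.symm
  set F : ℕ → ℝ → ℝ := fun n t => (n : ℝ) * (1 - Real.exp (-μ * ((n:ℝ)⁻¹) * t)) with hF
  have hlim : ∀ t : ℝ, Tendsto (fun n : ℕ => F n t) atTop (𝓝 (μ * t)) := by
    intro t
    set c := μ * t with hc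
    have hd : HasDerivAt (fun x : ℝ => 1 - Real.exp (-c * x)) c 0 := by
      have h1 : HasDerivAt (fun x : ℝ => -c * x) (-c) 0 := by
        simpa using (hasDerivAt_id (0:ℝ)).const_mul (-c)
      have h3 := (h1.exp).const_sub 1
      simpa using h3
    have hslope := hasDerivAt_iff_tendsto_slope.mp hd
    have hseq : Tendsto (fun n : ℕ => ((n:ℝ))⁻¹) atTop (𝓝[≠] (0:ℝ)) := by
      apply tendsto_nhdsWithin_of_tendsto_nhds_of_eventually_within
      · exact tendsto_natCast_atTop_atTop.inv_tendsto_atTop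
      · filter_upwards [eventually_ge_atTop 1] with n hn
        simp only [Set.mem_compl_iff, Set.mem_singleton_iff]
        positivity
    refine (hslope.comp hseq).congr' ?_
    filter_upwards [eventually_ge_atTop 1] with n hn
    have hn0 : (n:ℝ) ≠ 0 := by positivity
    simp only [Function.comp_apply, slope_def_field, hF, hc]
    rw [show -(μ * t) * ((n:ℝ))⁻¹ = -μ * ((n:ℝ))⁻¹ * t by ring]
    simp only [Real.exp_zero, sub_zero]
    field_simp
    ring_nf
    simp only [Real.exp_zero]
    ring
  have hFm : ∀ n : ℕ, AEStronglyMeasurable (F n) G := by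
    intro n
    apply Continuous.aestronglyMeasurable
    simp only [hF]
    exact continuous_const.mul (continuous_const.sub
      (Real.continuous_exp.comp (by continuity)))
  have hbound : ∀ n : ℕ, ∀ᵐ t ∂G, ‖F n t‖ ≤ μ * t := by
    intro n
    filter_upwards [hae] with t ht
    simp only [hF]
    rcases Nat.eq_zero_or_pos n with hn | hn
    · subst hn; simp; positivity
    · have hn0 : (0:ℝ) < (n:ℝ) := by exact_mod_cast hn
      have hx : 0 ≤ μ * (n:ℝ)⁻¹ * t := by positivity
      have hexp : -μ * (n:ℝ)⁻¹ * t = -(μ * (n:ℝ)⁻¹ * t) := by ring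
      rw [hexp]
      have h1 : Real.exp (-(μ * (n:ℝ)⁻¹ * t)) ≤ 1 := Real.exp_le_one_iff.2 (by linarith)
      have h2 : 1 - (μ * (n:ℝ)⁻¹ * t) ≤ Real.exp (-(μ * (n:ℝ)⁻¹ * t)) := by
        have := Real.add_one_le_exp (-(μ * (n:ℝ)⁻¹ * t)); linarith
      rw [Real.norm_eq_abs, abs_of_nonneg (by nlinarith)]
      have hmm : (n:ℝ) * (μ * (n:ℝ)⁻¹ * t) = μ * t := by field_simp
      nlinarith
  have hmul : Integrable (fun t => μ * t) G := hid.const_mul μ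
  have htend : Tendsto (fun n : ℕ => ∫ t, F n t ∂G) atTop (𝓝 (∫ t, μ * t ∂G)) :=
    tendsto_integral_of_dominated_convergence _ hFm hmul hbound
      (Eventually.of_forall hlim)
  have h1lt : 1 < ∫ t, μ * t ∂G := by
    rw [integral_const_mul, hmean]
    rw [show μ * (1 / lam) = μ / lam by ring, lt_div_iff₀ hlam]
    linarith
  obtain ⟨n, hn1, hn2⟩ := ((htend.eventually_const_lt h1lt).and (eventually_ge_atTop 2)).exists
  have hn0 : (0:ℝ) < (n:ℝ) := by
    have : (2:ℝ) ≤ (n:ℝ) := by exact_mod_cast hn2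
    linarith
  have hinv : (0:ℝ) < (n:ℝ)⁻¹ := inv_pos.2 hn0
  have hinvle : (n:ℝ)⁻¹ ≤ 1 := by
    rw [inv_le_one_iff₀]
    right
    have : (2:ℝ) ≤ (n:ℝ) := by exact_mod_cast hn2
    linarith
  set η₀ : ℝ := 1 - (n:ℝ)⁻¹ with hη₀
  have h1η : 1 - η₀ = (n:ℝ)⁻¹ := by rw [hη₀]; ring
  have hη₀le : η₀ ≤ 1 := by rw [hη₀]; linarith
  have hη₀lt : η₀ < 1 := by rw [hη₀]; linarith
  have hη₀0 : 0 ≤ η₀ := by rw [hη₀]; linarith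
  have hfeq : f η₀ = ∫ t, Real.exp (-μ * (n:ℝ)⁻¹ * t) ∂G := by
    rw [hf]
    simp only [h1η]
  have hintn : Integrable (fun t => Real.exp (-μ * (n:ℝ)⁻¹ * t)) G := by
    have := hint η₀ hη₀le
    simpa only [h1η] using this
  have hFeq : ∫ t, F n t ∂G = (n:ℝ) * (1 - f η₀) := by
    simp only [hF]
    rw [integral_const_mul, integral_sub (integrable_const 1) hintn, integral_const, hfeq]
    simp
  rw [hFeq] at hn1
  have hfη : f η₀ < η₀ := by
    have hkey : (n:ℝ)⁻¹ < 1 - f η₀ := by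
      nlinarith [mul_lt_mul_of_pos_left hn1 hinv, mul_inv_cancel₀ hn0.ne']
    rw [hη₀]; linarith
  have hg : ContinuousOn (fun η => f η - η) (Set.Icc 0 η₀) :=
    (hcont.mono (Set.Icc_subset_Icc_right hη₀le)).sub continuousOn_id
  have hmem0 : (0:ℝ) ∈ Set.Ioo ((fun η => f η - η) η₀) ((fun η => f η - η) 0) := by
    constructor
    · simpa using sub_neg.2 hfη
    · simpa using hf0
  obtain ⟨c, hcIoo, hgc⟩ := intermediate_value_Ioo' hη₀0 hg hmem0
  refine ⟨c, ⟨hcIoo.1, hcIoo.2.trans_le hη₀le⟩, ?_⟩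
  have : f c - c = 0 := hgc
  linarith
end

section
/- Let λ > 0 and for each μ > λ let η(μ) ∈ (0, 1) be the unique solution of η(μ) = exp(−(μ/λ)(1 − η(μ))). Then the mean system delay D(μ) = 1/μ + η(μ)/(μ(1 − η(μ))) = 1/(μ(1 − η(μ))) is strictly decreasing in μ on (λ, ∞). -/
/-- Strict decrease of `x ↦ (1 - exp (-x))/x` in product form. -/
lemma dm1_key {a b : ℝ} (ha : 0 < a) (hab : a < b) :
    a * (1 - Real.exp (-b)) < b * (1 - Real.exp (-a)) := by
  have hb : 0 < b := ha.trans hab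
  have hne : (-b : ℝ) ≠ 0 := by nlinarith
  have h1 : (0:ℝ) < a / b := by positivity
  have h2 : (0:ℝ) < 1 - a / b := by
    have : a / b < 1 := (div_lt_one hb).2 hab
    linarith
  have hconv := strictConvexOn_exp.2 (Set.mem_univ (-b)) (Set.mem_univ 0) hne h1 h2
    (by ring)
  simp only [smul_eq_mul, mul_zero, add_zero, Real.exp_zero, mul_one] at hconv
  have harg : a / b * -b = -a := by field_simp
  rw [harg] at hconv
  -- exp(-a) < a/b * exp(-b) + (1 - a/b)
  have h3 := mul_lt_mul_of_pos_left hconv hb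
  have h4 : b * (a / b * Real.exp (-b) + (1 - a / b)) = a * Real.exp (-b) + (b - a) := by
    field_simp
  rw [h4] at h3
  nlinarith [h3]

/-- For the D/M/1 queue with arrival rate `λ > 0`, let `η(μ) ∈ (0,1)` be the
fixed point `η(μ) = exp(−(μ/λ)(1 − η(μ)))` for each service rate `μ > λ`.
Then the mean system delay `D(μ) = 1/μ + η(μ)/(μ(1 − η(μ))) = 1/(μ(1 − η(μ)))`
is strictly decreasing in `μ` on `(λ, ∞)`. -/
theorem dm1_mean_delay_strict_anti
    (lam : ℝ) (hlam : 0 < lam)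
    (η : ℝ → ℝ)
    (hη : ∀ μ, lam < μ → η μ ∈ Set.Ioo (0 : ℝ) 1)
    (hfix : ∀ μ, lam < μ → η μ = Real.exp (-(μ / lam) * (1 - η μ))) :
    (∀ μ ∈ Set.Ioi lam,
      1 / μ + η μ / (μ * (1 - η μ)) = 1 / (μ * (1 - η μ))) ∧
    StrictAntiOn (fun μ => 1 / (μ * (1 - η μ))) (Set.Ioi lam) := by
  constructor
  · intro μ hμ
    have hμpos : 0 < μ := hlam.trans hμ
    obtain ⟨h0, h1⟩ := hη μ hμ
    have hne : (1 - η μ) ≠ 0 := by linarith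
    field_simp
    ring
  · intro μ₁ h₁ μ₂ h₂ hlt
    simp only [Set.mem_Ioi] at h₁ h₂
    have hμ₁ : 0 < μ₁ := hlam.trans h₁
    have hμ₂ : 0 < μ₂ := hlam.trans h₂
    obtain ⟨he₁0, he₁1⟩ := hη μ₁ h₁
    obtain ⟨he₂0, he₂1⟩ := hη μ₂ h₂
    set x₁ := μ₁ / lam * (1 - η μ₁) with hx₁def
    set x₂ := μ₂ / lam * (1 - η μ₂) with hx₂def
    have hx₁pos : 0 < x₁ := by
      apply mul_pos (by positivity) (by linarith)
    have hx₂pos : 0 < x₂ := by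
      apply mul_pos (by positivity) (by linarith)
    have hE₁ : η μ₁ = Real.exp (-x₁) := by
      rw [hfix μ₁ h₁]; congr 1; ring
    have hE₂ : η μ₂ = Real.exp (-x₂) := by
      rw [hfix μ₂ h₂]; congr 1; ring
    have hy₁ : μ₁ * (1 - η μ₁) = lam * x₁ := by
      rw [hx₁def]; field_simp
    have hy₂ : μ₂ * (1 - η μ₂) = lam * x₂ := by
      rw [hx₂def]; field_simp
    have hxlt : x₁ < x₂ := by
      by_contra h
      push_neg at h
      rcases eq_or_lt_of_le h with heq | hlt2
      · -- x₂ = x₁ ⇒ η μ₁ = η μ₂ ⇒ μ₁ = μ₂, contradiction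
        have heη : η μ₁ = η μ₂ := by rw [hE₁, hE₂, heq]
        have : μ₁ * (1 - η μ₁) = μ₂ * (1 - η μ₁) := by
          rw [hy₁, ← heq, ← hy₂, heη]
        have hμeq : μ₁ = μ₂ := by
          have h1 : (1 - η μ₁) ≠ 0 := by linarith
          field_simp at this
          linarith
        linarith
      · have hk := dm1_key hx₂pos hlt2
        rw [← hE₁, ← hE₂] at hk
        -- x₂ * (1 - η μ₁) < x₁ * (1 - η μ₂)
        -- multiply by μ₁ μ₂ : x₂ μ₂ lam x₁ < x₁ μ₁ lam x₂ ⇒ μ₂ < μ₁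
        have h1 : μ₁ * μ₂ * (x₂ * (1 - η μ₁)) < μ₁ * μ₂ * (x₁ * (1 - η μ₂)) :=
          mul_lt_mul_of_pos_left hk (by positivity)
        have e1 : μ₁ * μ₂ * (x₂ * (1 - η μ₁)) = μ₂ * x₂ * (μ₁ * (1 - η μ₁)) := by ring
        have e2 : μ₁ * μ₂ * (x₁ * (1 - η μ₂)) = μ₁ * x₁ * (μ₂ * (1 - η μ₂)) := by ring
        rw [e1, e2, hy₁, hy₂] at h1
        -- μ₂ * x₂ * (lam * x₁) < μ₁ * x₁ * (lam * x₂)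
        nlinarith [mul_pos hx₁pos hx₂pos, mul_pos (mul_pos hlam hx₁pos) hx₂pos]
    have hylt : μ₁ * (1 - η μ₁) < μ₂ * (1 - η μ₂) := by
      rw [hy₁, hy₂]
      exact mul_lt_mul_of_pos_left hxlt hlam
    have hy₁pos : 0 < μ₁ * (1 - η μ₁) := by rw [hy₁]; positivity
    exact one_div_lt_one_div_of_lt hy₁pos hylt
end

section
/- Let λ > 0 and for each μ > λ let η(μ) ∈ (0, 1) be the unique solution of η(μ) = exp(−(μ/λ)(1 − η(μ))). Then the mean system delay D(μ) = 1/(μ(1 − η(μ))) is a convex function of μ on (λ, ∞). Consequently, for constants a, b ≥ 0 and any fixed choice of arrival rates λ₁, λ₂ > 0, the function (μ₁, μ₂) ↦ a/(μ₁(1 − η₁(μ₁))) + b/(μ₂(1 − η₂(μ₂))) (with ηᵢ(μᵢ) the corresponding fixed points for rate λᵢ) is convex on {(μ₁, μ₂) : μ₁ > λ₁, μ₂ > λ₂}. -/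
open Real Set

private lemma myexp_neg_lt_one {u : ℝ} (hu : 0 < u) : Real.exp (-1 / u) < 1 := by
  rw [Real.exp_lt_one_iff]
  exact div_neg_of_neg_of_pos (by norm_num) hu

private lemma myF_pos {u : ℝ} (hu : 0 < u) : 0 < u * (1 - Real.exp (-1 / u)) :=
  mul_pos hu (by linarith [myexp_neg_lt_one hu])

private lemma myhasDerivAt_E {u : ℝ} (hu : 0 < u) :
    HasDerivAt (fun x : ℝ => Real.exp (-1 / x)) (Real.exp (-1 / u) / u ^ 2) u := by
  have h1 : HasDerivAt (fun x : ℝ => -1 / x) (1 / u ^ 2) u := by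
    simpa [neg_div, one_div, Pi.neg_def] using (hasDerivAt_inv (ne_of_gt hu)).neg
  simpa [mul_one_div, div_eq_mul_inv] using h1.exp

private lemma myhasDerivAt_F {u : ℝ} (hu : 0 < u) :
    HasDerivAt (fun x : ℝ => x * (1 - Real.exp (-1 / x)))
      (1 - Real.exp (-1 / u) - Real.exp (-1 / u) / u) u := by
  have hu' : u ≠ 0 := ne_of_gt hu
  have h := (hasDerivAt_id' (x := u)).fun_mul
      ((hasDerivAt_const u (1 : ℝ)).fun_sub (myhasDerivAt_E hu))
  refine h.congr_deriv ?_
  field_simp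
  ring

private lemma myFp_pos {u : ℝ} (hu : 0 < u) :
    0 < 1 - Real.exp (-1 / u) - Real.exp (-1 / u) / u := by
  have hv : (0:ℝ) < 1 / u := by positivity
  have h1 : (1:ℝ) / u + 1 < Real.exp (1 / u) := Real.add_one_lt_exp (ne_of_gt hv)
  have h3 : Real.exp (-1 / u) * Real.exp (1 / u) = 1 := by
    have he : (-1 / u) + (1 / u) = 0 := by ring
    rw [← Real.exp_add, he, Real.exp_zero]
  have key : Real.exp (-1 / u) * (1 + 1 / u) < 1 := by
    calc Real.exp (-1 / u) * (1 + 1 / u)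
        < Real.exp (-1 / u) * Real.exp (1 / u) :=
          (mul_lt_mul_iff_right₀ (Real.exp_pos _)).2 (by linarith)
      _ = 1 := h3
  have hexpand : Real.exp (-1 / u) * (1 + 1 / u)
      = Real.exp (-1 / u) + Real.exp (-1 / u) / u := by ring
  linarith [key, hexpand.ge, hexpand.le]

private lemma myhasDerivAt_Fp {u : ℝ} (hu : 0 < u) :
    HasDerivAt (fun x : ℝ => 1 - Real.exp (-1 / x) - Real.exp (-1 / x) / x)
      (-(Real.exp (-1 / u) / u ^ 3)) u := by
  have hu' : u ≠ 0 := ne_of_gt hu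
  have h := ((hasDerivAt_const u (1 : ℝ)).fun_sub (myhasDerivAt_E hu)).fun_sub
      ((myhasDerivAt_E hu).fun_div (hasDerivAt_id' (x := u)) hu')
  refine h.congr_deriv ?_
  field_simp
  ring

private lemma myhasDerivAt_psi {u : ℝ} (hu : 0 < u) :
    HasDerivAt (fun x : ℝ => 1 / (x * (1 - Real.exp (-1 / x))))
      (-(1 - Real.exp (-1 / u) - Real.exp (-1 / u) / u)
        / (u * (1 - Real.exp (-1 / u))) ^ 2) u := by
  have h := (myhasDerivAt_F hu).fun_inv (ne_of_gt (myF_pos hu))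
  simpa [one_div] using h

private lemma myhasDerivAt_psi' {u : ℝ} (hu : 0 < u) :
    HasDerivAt (fun x : ℝ =>
        -(1 - Real.exp (-1 / x) - Real.exp (-1 / x) / x)
          / (x * (1 - Real.exp (-1 / x))) ^ 2)
      ((Real.exp (-1 / u) / u ^ 3 * (u * (1 - Real.exp (-1 / u))) ^ 2 +
        2 * (u * (1 - Real.exp (-1 / u))) *
          (1 - Real.exp (-1 / u) - Real.exp (-1 / u) / u) ^ 2)
        / ((u * (1 - Real.exp (-1 / u))) ^ 2) ^ 2) u := by
  have hden : (u * (1 - Real.exp (-1 / u))) ^ 2 ≠ 0 :=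
    pow_ne_zero _ (ne_of_gt (myF_pos hu))
  have h := ((myhasDerivAt_Fp hu).fun_neg.fun_div ((myhasDerivAt_F hu).fun_pow 2) hden)
  refine h.congr_deriv ?_
  push_cast
  ring

private lemma my_psi_convexOn :
    ConvexOn ℝ (Set.Ioi (0:ℝ)) (fun u => 1 / (u * (1 - Real.exp (-1 / u)))) := by
  apply convexOn_of_hasDerivWithinAt2_nonneg (convex_Ioi 0)
    (f' := fun u => -(1 - Real.exp (-1 / u) - Real.exp (-1 / u) / u)
        / (u * (1 - Real.exp (-1 / u))) ^ 2)
    (f'' := fun u => (Real.exp (-1 / u) / u ^ 3 * (u * (1 - Real.exp (-1 / u))) ^ 2 +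
        2 * (u * (1 - Real.exp (-1 / u))) *
          (1 - Real.exp (-1 / u) - Real.exp (-1 / u) / u) ^ 2)
        / ((u * (1 - Real.exp (-1 / u))) ^ 2) ^ 2)
  · intro u hu
    exact (myhasDerivAt_psi hu).continuousAt.continuousWithinAt
  · intro u hu
    rw [interior_Ioi] at hu
    exact (myhasDerivAt_psi hu).hasDerivWithinAt
  · intro u hu
    rw [interior_Ioi] at hu
    exact (myhasDerivAt_psi' hu).hasDerivWithinAt
  · intro u hu
    rw [interior_Ioi] at hu
    have hu0 : (0:ℝ) < u := hu
    apply div_nonneg _ (sq_nonneg _)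
    have h1 : 0 ≤ Real.exp (-1 / u) / u ^ 3 :=
      le_of_lt (div_pos (Real.exp_pos _) (by positivity))
    have h2 : (0:ℝ) ≤ u * (1 - Real.exp (-1 / u)) := (myF_pos hu0).le
    nlinarith [sq_nonneg (u * (1 - Real.exp (-1 / u))),
      sq_nonneg (1 - Real.exp (-1 / u) - Real.exp (-1 / u) / u),
      mul_nonneg h1 (sq_nonneg (u * (1 - Real.exp (-1 / u)))),
      mul_nonneg h2 (sq_nonneg (1 - Real.exp (-1 / u) - Real.exp (-1 / u) / u))]

private lemma my_psi_strictAnti :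
    StrictAntiOn (fun u : ℝ => 1 / (u * (1 - Real.exp (-1 / u)))) (Set.Ioi (0:ℝ)) := by
  apply strictAntiOn_of_deriv_neg (convex_Ioi 0)
  · intro u hu
    exact (myhasDerivAt_psi hu).continuousAt.continuousWithinAt
  · intro u hu
    rw [interior_Ioi] at hu
    have hu0 : (0:ℝ) < u := hu
    rw [(myhasDerivAt_psi hu0).deriv]
    apply div_neg_of_neg_of_pos
    · simpa using neg_neg_of_pos (myFp_pos hu0)
    · exact pow_pos (myF_pos hu0) 2

private lemma myD_convexOn (lam : ℝ) (hlam : 0 < lam) (η : ℝ → ℝ)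
    (hη : ∀ μ, lam < μ → η μ ∈ Set.Ioo (0 : ℝ) 1)
    (hfix : ∀ μ, lam < μ → η μ = Real.exp (-(μ / lam) * (1 - η μ))) :
    ConvexOn ℝ (Set.Ioi lam) (fun μ => 1 / (μ * (1 - η μ))) := by
  have hlam' : lam ≠ 0 := ne_of_gt hlam
  have hpos : ∀ μ ∈ Set.Ioi lam, 0 < μ * (1 - η μ) := by
    intro μ hμ
    have h1 := hη μ hμ
    have hμ0 : 0 < μ := lt_trans hlam hμ
    nlinarith [h1.1, h1.2]
  have hmemu : ∀ μ ∈ Set.Ioi lam, lam * (1 / (μ * (1 - η μ))) ∈ Set.Ioi (0:ℝ) := by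
    intro μ hμ
    have := hpos μ hμ
    have : 0 < lam * (1 / (μ * (1 - η μ))) := by positivity
    exact this
  have hpsi : ∀ μ ∈ Set.Ioi lam,
      1 / ((lam * (1 / (μ * (1 - η μ)))) *
          (1 - Real.exp (-1 / (lam * (1 / (μ * (1 - η μ))))))) = μ / lam := by
    intro μ hμ
    have hw : 0 < μ * (1 - η μ) := hpos μ hμ
    have hwne : μ * (1 - η μ) ≠ 0 := ne_of_gt hw
    have hμ0 : 0 < μ := lt_trans hlam hμ
    have hη1 : (1:ℝ) - η μ ≠ 0 := by
      have := (hη μ hμ).2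
      intro h; rw [sub_eq_zero] at h; exact absurd h.symm (ne_of_lt this)
    have hexp : Real.exp (-1 / (lam * (1 / (μ * (1 - η μ))))) = η μ := by
      have harg : -1 / (lam * (1 / (μ * (1 - η μ)))) = -(μ / lam) * (1 - η μ) := by
        field_simp
      rw [harg, ← hfix μ hμ]
    rw [hexp]
    field_simp
  refine ⟨convex_Ioi lam, ?_⟩
  intro x hx y hy θ τ hθ hτ hsum
  have hzmem : θ • x + τ • y ∈ Set.Ioi lam := (convex_Ioi lam) hx hy hθ hτ hsum
  simp only [smul_eq_mul] at hzmem ⊢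
  by_contra hcon
  push_neg at hcon
  set z := θ * x + τ * y with hzdef
  have hux := hmemu x hx
  have huy := hmemu y hy
  have huz := hmemu z hzmem
  have hpx := hpsi x hx
  have hpy := hpsi y hy
  have hpz := hpsi z hzmem
  have hlt : θ * (lam * (1 / (x * (1 - η x)))) + τ * (lam * (1 / (y * (1 - η y))))
      < lam * (1 / (z * (1 - η z))) := by
    have h := mul_lt_mul_of_pos_left hcon hlam
    nlinarith [h]
  have hmidpos : θ * (lam * (1 / (x * (1 - η x)))) + τ * (lam * (1 / (y * (1 - η y))))
      ∈ Set.Ioi (0:ℝ) := by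
    have h1 : (0:ℝ) < lam * (1 / (x * (1 - η x))) := hux
    have h2 : (0:ℝ) < lam * (1 / (y * (1 - η y))) := huy
    rcases le_total (lam * (1 / (x * (1 - η x)))) (lam * (1 / (y * (1 - η y)))) with h | h
    · have : (0:ℝ) < θ * (lam * (1 / (x * (1 - η x)))) + τ * (lam * (1 / (y * (1 - η y)))) := by
        nlinarith [mul_nonneg hτ (sub_nonneg.mpr h)]
      exact this
    · have : (0:ℝ) < θ * (lam * (1 / (x * (1 - η x)))) + τ * (lam * (1 / (y * (1 - η y)))) := by
        nlinarith [mul_nonneg hθ (sub_nonneg.mpr h)]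
      exact this
  have h1 := my_psi_strictAnti hmidpos huz hlt
  have h2 := my_psi_convexOn.2 hux huy hθ hτ hsum
  simp only [smul_eq_mul] at h1 h2
  rw [hpx, hpy] at h2
  rw [hpz] at h1
  have heq : z / lam = θ * (x / lam) + τ * (y / lam) := by
    rw [hzdef]; field_simp
  linarith [h1, h2, heq.le, heq.ge]

/-- For the D/M/1 queue with arrival rate `λ > 0`, with `η(μ) ∈ (0,1)` the
fixed point `η(μ) = exp(−(μ/λ)(1 − η(μ)))` for each `μ > λ`, the mean system
delay `D(μ) = 1/(μ(1 − η(μ)))` is convex in `μ` on `(λ, ∞)`. Consequently,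
for weights `a, b ≥ 0` and arrival rates `λ₁, λ₂ > 0` with corresponding
fixed-point functions `η₁, η₂`, the two-server objective
`(μ₁, μ₂) ↦ a/(μ₁(1 − η₁(μ₁))) + b/(μ₂(1 − η₂(μ₂)))` is convex on
`{(μ₁, μ₂) : μ₁ > λ₁, μ₂ > λ₂}`. -/
theorem dm1_mean_delay_convex
    (lam : ℝ) (hlam : 0 < lam)
    (η : ℝ → ℝ)
    (hη : ∀ μ, lam < μ → η μ ∈ Set.Ioo (0 : ℝ) 1)
    (hfix : ∀ μ, lam < μ → η μ = Real.exp (-(μ / lam) * (1 - η μ)))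
    (a b lam₁ lam₂ : ℝ) (ha : 0 ≤ a) (hb : 0 ≤ b)
    (hlam₁ : 0 < lam₁) (hlam₂ : 0 < lam₂)
    (η₁ η₂ : ℝ → ℝ)
    (hη₁ : ∀ μ, lam₁ < μ → η₁ μ ∈ Set.Ioo (0 : ℝ) 1)
    (hfix₁ : ∀ μ, lam₁ < μ → η₁ μ = Real.exp (-(μ / lam₁) * (1 - η₁ μ)))
    (hη₂ : ∀ μ, lam₂ < μ → η₂ μ ∈ Set.Ioo (0 : ℝ) 1)
    (hfix₂ : ∀ μ, lam₂ < μ → η₂ μ = Real.exp (-(μ / lam₂) * (1 - η₂ μ))) :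
    ConvexOn ℝ (Set.Ioi lam) (fun μ => 1 / (μ * (1 - η μ))) ∧
    ConvexOn ℝ {p : ℝ × ℝ | lam₁ < p.1 ∧ lam₂ < p.2}
      (fun p => a / (p.1 * (1 - η₁ p.1)) + b / (p.2 * (1 - η₂ p.2))) := by
  have hC1 := myD_convexOn lam₁ hlam₁ η₁ hη₁ hfix₁
  have hC2 := myD_convexOn lam₂ hlam₂ η₂ hη₂ hfix₂
  refine ⟨myD_convexOn lam hlam η hη hfix, ?_⟩
  have hsetconv : Convex ℝ {p : ℝ × ℝ | lam₁ < p.1 ∧ lam₂ < p.2} := by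
    have : {p : ℝ × ℝ | lam₁ < p.1 ∧ lam₂ < p.2} = (Set.Ioi lam₁) ×ˢ (Set.Ioi lam₂) := rfl
    rw [this]
    exact (convex_Ioi lam₁).prod (convex_Ioi lam₂)
  refine ⟨hsetconv, ?_⟩
  intro p hp q hq θ τ hθ hτ hsum
  have hp' : lam₁ < p.1 ∧ lam₂ < p.2 := hp
  have hq' : lam₁ < q.1 ∧ lam₂ < q.2 := hq
  have h1 := hC1.2 (Set.mem_Ioi.mpr hp'.1) (Set.mem_Ioi.mpr hq'.1) hθ hτ hsum
  have h2 := hC2.2 (Set.mem_Ioi.mpr hp'.2) (Set.mem_Ioi.mpr hq'.2) hθ hτ hsum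
  simp only [smul_eq_mul] at h1 h2
  simp only [Prod.smul_fst, Prod.smul_snd, Prod.fst_add, Prod.snd_add, smul_eq_mul]
  simp only [div_eq_mul_inv, one_div] at h1 h2 ⊢
  nlinarith [mul_le_mul_of_nonneg_left h1 ha, mul_le_mul_of_nonneg_left h2 hb]
end
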